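/- arXiv:math/0502471 — 5 statements merged into one kernel-verified Lean document; each statement's English description precedes it below -/
import Mathlib

section
/- Let K be a field, n a positive integer, and A an n×n matrix with entries in the polynomial ring K[λ] whose determinant is a nonzero polynomial (i.e. A is invertible over the field of rational functions K(λ)). Then there exist n×n matrices E, D, F with entries in K[λ] such that det(E) = 1, det(F) = 1, D is a diagonal matrix, and A = E·D·F. -/
open Matrix

/-- Smith factorization: any square matrix over `K[λ]` (for `K` a field) with nonzero
determinant can be written as `E * D * F` where `E`, `F` have determinant `1` and
`D` is diagonal. -/
theorem smith_factorization_of_polynomial_matrix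
    (K : Type*) [Field K] (n : ℕ) (hn : 0 < n)
    (A : Matrix (Fin n) (Fin n) (Polynomial K)) (hA : A.det ≠ 0) :
    ∃ E D F : Matrix (Fin n) (Fin n) (Polynomial K),
      E.det = 1 ∧ F.det = 1 ∧ D.IsDiag ∧ A = E * D * F := by
  set b : Module.Basis (Fin n) (Polynomial K) (Fin n → (Polynomial K)) := Pi.basisFun (Polynomial K) (Fin n) with hb
  set L := Matrix.toLin' A with hL
  have hinj : Function.Injective L := by
    rw [← LinearMap.ker_eq_bot, LinearMap.ker_eq_bot']
    intro v hv
    by_contra hv0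
    exact hA (Matrix.exists_mulVec_eq_zero_iff.mp
      ⟨v, hv0, by simpa [hL, Matrix.toLin'_apply] using hv⟩)
  set N := LinearMap.range L with hN
  obtain ⟨m, snf⟩ := Submodule.smithNormalForm b N
  let eqv : (Fin n → (Polynomial K)) ≃ₗ[(Polynomial K)] N := LinearEquiv.ofInjective L hinj
  have hmn : m = n := by
    have e := Module.Basis.indexEquiv snf.bN (b.map eqv)
    simpa using Fintype.card_congr e
  subst hmn
  set σ : Fin m ≃ Fin m :=
    Equiv.ofBijective snf.f (Finite.injective_iff_bijective.mp snf.f.injective) with hσ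
  set E : Matrix (Fin m) (Fin m) (Polynomial K) := b.toMatrix snf.bM with hE
  set D' : Matrix (Fin m) (Fin m) (Polynomial K) := Matrix.diagonal (fun i => snf.a (σ.symm i)) with hD'
  set P : Matrix (Fin m) (Fin m) (Polynomial K) := σ.symm.toPEquiv.toMatrix with hP
  set F : Matrix (Fin m) (Fin m) (Polynomial K) := LinearMap.toMatrix b snf.bN (eqv : (Fin m → (Polynomial K)) →ₗ[(Polynomial K)] N)
    with hF
  set G : Matrix (Fin m) (Fin m) (Polynomial K) := LinearMap.toMatrix snf.bN b (eqv.symm : N →ₗ[(Polynomial K)] (Fin m → (Polynomial K)))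
    with hG
  have hFG : F * G = 1 := by
    rw [hF, hG, ← LinearMap.toMatrix_comp snf.bN b snf.bN, LinearEquiv.comp_coe,
      LinearEquiv.symm_trans_self, LinearEquiv.refl_toLinearMap, LinearMap.toMatrix_id]
  -- A as matrix of L
  have hAL : LinearMap.toMatrix b b L = A := by
    rw [hb, LinearMap.toMatrix_eq_toMatrix', hL, LinearMap.toMatrix'_toLin']
  have hLcomp : L = N.subtype.comp (eqv : (Fin m → (Polynomial K)) →ₗ[(Polynomial K)] N) := by
    refine LinearMap.ext fun x => ?_
    simp only [LinearMap.comp_apply, Submodule.subtype_apply]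
    exact (LinearEquiv.ofInjective_apply L x).symm
  have key1 : A = (LinearMap.toMatrix snf.bN b N.subtype) * F := by
    rw [← hAL, hLcomp, LinearMap.toMatrix_comp b snf.bN b]
  have key2 : LinearMap.toMatrix snf.bN b N.subtype = E * (D' * P) := by
    ext i j
    have lhs : LinearMap.toMatrix snf.bN b N.subtype i j
        = snf.a j * b.repr (snf.bM (snf.f j)) i := by
      rw [LinearMap.toMatrix_apply, Submodule.subtype_apply, snf.snf j, _root_.map_smul]
      simp [smul_eq_mul]
    rw [lhs, Matrix.mul_apply]
    have hQ : ∀ k, (D' * P) k j = if k = σ j then snf.a j else 0 := by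
      intro k
      rw [hD', hP, Matrix.diagonal_mul, PEquiv.toMatrix_apply, Equiv.toPEquiv_apply]
      by_cases h : k = σ j
      · subst h; simp
      · have h2 : ¬ (j = σ.symm k) := fun hc => h (by simp [hc])
        have h3 : ¬ (σ.symm k = j) := fun hc => h2 hc.symm
        simp [h2, h3, h]
    rw [Finset.sum_eq_single (σ j)]
    · rw [hQ, if_pos rfl, hE, Module.Basis.toMatrix_apply]
      have : σ j = snf.f j := rfl
      rw [this, mul_comm]
    · intro k _ hk
      rw [hQ, if_neg hk, mul_zero]
    · intro h; exact absurd (Finset.mem_univ _) h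
  have hA_fact : A = E * D' * (P * F) := by
    rw [key1, key2, Matrix.mul_assoc, Matrix.mul_assoc, Matrix.mul_assoc]
  -- units
  have hEunit : IsUnit E.det := by
    have h1 : E * snf.bM.toMatrix b = 1 := Module.Basis.toMatrix_mul_toMatrix_flip b snf.bM
    exact IsUnit.of_mul_eq_one _ (by rw [← Matrix.det_mul, h1, Matrix.det_one])
  have hPunit : P * σ.toPEquiv.toMatrix = 1 := by
    rw [hP, ← PEquiv.toMatrix_trans, ← Equiv.toPEquiv_trans, Equiv.symm_trans_self,
      Equiv.toPEquiv_refl, PEquiv.toMatrix_refl]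
  have hPFunit : IsUnit ((P * F).det) := by
    have h1 : (P * F) * (G * σ.toPEquiv.toMatrix) = 1 := by
      rw [Matrix.mul_assoc, ← Matrix.mul_assoc F, hFG, Matrix.one_mul, hPunit]
    exact IsUnit.of_mul_eq_one _ (by rw [← Matrix.det_mul, h1, Matrix.det_one])
  obtain ⟨u, hu⟩ := hEunit
  obtain ⟨v, hv⟩ := hPFunit
  set i0 : Fin m := ⟨0, hn⟩
  set d1 : Fin m → (Polynomial K) := fun i => if i = i0 then (↑u⁻¹ : (Polynomial K)) else 1 with hd1
  set d1' : Fin m → (Polynomial K) := fun i => if i = i0 then (↑u : (Polynomial K)) else 1 with hd1'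
  set d2 : Fin m → (Polynomial K) := fun i => if i = i0 then (↑v⁻¹ : (Polynomial K)) else 1 with hd2
  set d2' : Fin m → (Polynomial K) := fun i => if i = i0 then (↑v : (Polynomial K)) else 1 with hd2'
  have hc1 : Matrix.diagonal d1 * Matrix.diagonal d1' = 1 := by
    rw [Matrix.diagonal_mul_diagonal]
    have hfun : (fun i => d1 i * d1' i) = fun _ => (1 : Polynomial K) := by
      funext i
      rcases eq_or_ne i i0 with rfl | h
      · simp [hd1, hd1']
      · simp [hd1, hd1', h]
    rw [hfun]
    exact Matrix.diagonal_one
  have hc2 : Matrix.diagonal d2' * Matrix.diagonal d2 = 1 := by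
    rw [Matrix.diagonal_mul_diagonal]
    have hfun : (fun i => d2' i * d2 i) = fun _ => (1 : Polynomial K) := by
      funext i
      rcases eq_or_ne i i0 with rfl | h
      · simp [hd2, hd2']
      · simp [hd2, hd2', h]
    rw [hfun]
    exact Matrix.diagonal_one
  refine ⟨E * Matrix.diagonal d1,
    Matrix.diagonal d1' * D' * Matrix.diagonal d2',
    Matrix.diagonal d2 * (P * F), ?_, ?_, ?_, ?_⟩
  · rw [Matrix.det_mul, Matrix.det_diagonal, ← hu]
    simp [hd1, Finset.prod_ite_eq']
  · rw [Matrix.det_mul, Matrix.det_diagonal, ← hv]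
    simp [hd2, Finset.prod_ite_eq']
  · rw [hD', Matrix.diagonal_mul_diagonal, Matrix.diagonal_mul_diagonal]
    exact Matrix.isDiag_diagonal _
  · calc A = E * D' * (P * F) := hA_fact
      _ = E * (Matrix.diagonal d1 * Matrix.diagonal d1') * D'
          * (Matrix.diagonal d2' * Matrix.diagonal d2) * (P * F) := by
            rw [hc1, hc2, Matrix.mul_one, Matrix.mul_one]
      _ = E * Matrix.diagonal d1 * (Matrix.diagonal d1' * D' * Matrix.diagonal d2')
          * (Matrix.diagonal d2 * (P * F)) := by
            simp only [Matrix.mul_assoc]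
end

section
/- Let ν be a nonzero real number and k a nonzero complex number. Let be the 3×3 matrix over ℂ[X] given by = [[-ν(X² - k²), 0, -X], [0, -ν(X² - k²), -i·k], [X, i·k, 0]]. Then there exist 3×3 matrices E and F with entries in ℂ[X] such that det(E) = 1, det(F) = 1, and = E·D·F, where D is the diagonal matrix D = diag(1, 1, -ν·(X² - k²)²). -/
/-! With `c = i k` one has `X² - k² = X² + c²`, and `c` is a unit of `ℂ[X]` because `k ≠ 0`.
The Stokes symbol is therefore `!![-p, 0, -X; 0, -p, -c; X, c, 0]` with `p = ν Δ̂`. Over any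
commutative ring a matrix `!![-p, 0, -x; 0, -p, -u; x, u, 0]` with `u` invertible has determinant
`-p (x² + u²)`, and pivoting twice on `u` brings it to `diag(1, 1, -p (x² + u²))` by factors of
determinant one. -/

open Polynomial

namespace Matrix

variable {R : Type*} [CommRing R]

def saddleSmithLeft (p x u v : R) : Matrix (Fin 3) (Fin 3) R :=
  !![p * x * v, -x, v ^ 2; 0, -u, 0; u, 0, 0]

def saddleSmithRight (p x v : R) : Matrix (Fin 3) (Fin 3) R :=
  !![x * v, 1, 0; 0, p * v, 1; 1, 0, 0]

theorem det_saddleSmithLeft {u v : R} (huv : u * v = 1) (p x : R) :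
    (saddleSmithLeft p x u v).det = 1 := by
  rw [saddleSmithLeft, det_fin_three]
  simp only [of_apply, cons_val', cons_val_zero, cons_val_one, cons_val_two, cons_val_fin_one,
    head_cons, tail_cons, head_fin_const]
  linear_combination (u * v + 1) * huv

theorem det_saddleSmithRight (p x v : R) : (saddleSmithRight p x v).det = 1 := by
  simp [saddleSmithRight, det_fin_three]

theorem saddle_eq_saddleSmithLeft_mul_diagonal_mul_saddleSmithRight {u v : R} (huv : u * v = 1)
    (p x : R) :
    !![-p, 0, -x; 0, -p, -u; x, u, 0] =
      saddleSmithLeft p x u v * diagonal ![1, 1, -p * (x ^ 2 + u ^ 2)] * saddleSmithRight p x v := by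
  rw [saddleSmithLeft, saddleSmithRight, diagonal_vec3, mul_fin_three, mul_fin_three]
  simp only [EmbeddingLike.apply_eq_iff_eq, vecCons_inj, and_true]
  refine ⟨⟨?_, by ring, by ring⟩, ⟨by ring, ?_, by ring⟩, ?_, by ring, by ring⟩
  · linear_combination p * (u * v + 1) * huv
  · linear_combination p * huv
  · linear_combination -x * huv

end Matrix

theorem smith_factorization_stokes_2d_general (ν : ℝ) (k : ℂ) (hk : k ≠ 0) :
    ∃ E F : Matrix (Fin 3) (Fin 3) (Polynomial ℂ),
      E.det = 1 ∧ F.det = 1 ∧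
      (!![-C (ν : ℂ) * (X ^ 2 - C k ^ 2), 0,                               -X;
          0,                               -C (ν : ℂ) * (X ^ 2 - C k ^ 2), -C (Complex.I * k);
          X,                               C (Complex.I * k),              0] :
        Matrix (Fin 3) (Fin 3) (Polynomial ℂ))
        = E * Matrix.diagonal ![1, 1, -C (ν : ℂ) * (X ^ 2 - C k ^ 2) ^ 2] * F := by
  have hunit : C (Complex.I * k) * C (Complex.I * k)⁻¹ = 1 := by
    rw [← C_mul, mul_inv_cancel₀ (mul_ne_zero Complex.I_ne_zero hk), C_1]
  have hsq : C (Complex.I * k) ^ 2 = -C k ^ 2 := by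
    rw [← C_pow, mul_pow, Complex.I_sq, neg_one_mul, C_neg, C_pow]
  have hd : -C (ν : ℂ) * (X ^ 2 - C k ^ 2) ^ 2 =
      -(C (ν : ℂ) * (X ^ 2 - C k ^ 2)) * (X ^ 2 + C (Complex.I * k) ^ 2) := by
    rw [hsq]; ring
  rw [neg_mul, hd]
  exact ⟨_, _, Matrix.det_saddleSmithLeft hunit _ X, Matrix.det_saddleSmithRight _ X _,
    Matrix.saddle_eq_saddleSmithLeft_mul_diagonal_mul_saddleSmithRight hunit _ X⟩

/-- Smith factorization of the 2D Stokes symbol: `Â = E * D * F` with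
`det E = det F = 1` and `D = diag(1, 1, -ν (X² - k²)²)`. -/
theorem smith_factorization_stokes_2d (ν : ℝ) (hν : ν ≠ 0) (k : ℂ) (hk : k ≠ 0) :
    ∃ E F : Matrix (Fin 3) (Fin 3) (Polynomial ℂ),
      E.det = 1 ∧ F.det = 1 ∧
      (!![-C (ν : ℂ) * (X ^ 2 - C k ^ 2), 0,                               -X;
          0,                               -C (ν : ℂ) * (X ^ 2 - C k ^ 2), -C (Complex.I * k);
          X,                               C (Complex.I * k),              0] :
        Matrix (Fin 3) (Fin 3) (Polynomial ℂ))
        = E * Matrix.diagonal ![1, 1, -C (ν : ℂ) * (X ^ 2 - C k ^ 2) ^ 2] * F :=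
  smith_factorization_stokes_2d_general ν k hk
end

section
/- Let ν be a nonzero real number and let k₂, k₃ be complex numbers, not both zero. Set Δ̂ = X² - k₂² - k₃² ∈ ℂ[X] and let Â₃ be the 4×4 matrix over ℂ[X] given by Â₃ = [[-νΔ̂, 0, 0, -X], [0, -νΔ̂, 0, -i·k₂], [0, 0, -νΔ̂, -i·k₃], [X, i·k₂, i·k₃, 0]]. Then there exist 4×4 matrices E and F with entries in ℂ[X] such that det(E) = 1, det(F) = 1, and Â₃ = E·D·F, where D is the diagonal matrix D = diag(1, 1, -ν·Δ̂, -ν·Δ̂²). -/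
open Polynomial

set_option maxHeartbeats 4000000 in
private lemma smith_case_bc (ν : ℝ) (k₂ k₃ : ℂ) (h2 : k₂ ≠ 0) (h3 : k₃ ≠ 0) :
    ∃ E F : Matrix (Fin 4) (Fin 4) (Polynomial ℂ),
      E.det = 1 ∧ F.det = 1 ∧
      (!![-C (ν : ℂ) * (X ^ 2 - C k₂ ^ 2 - C k₃ ^ 2), 0, 0, -X;
          0, -C (ν : ℂ) * (X ^ 2 - C k₂ ^ 2 - C k₃ ^ 2), 0, -C (Complex.I * k₂);
          0, 0, -C (ν : ℂ) * (X ^ 2 - C k₂ ^ 2 - C k₃ ^ 2), -C (Complex.I * k₃);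
          X, C (Complex.I * k₂), C (Complex.I * k₃), 0] :
        Matrix (Fin 4) (Fin 4) (Polynomial ℂ))
        = E * Matrix.diagonal
            ![1, 1,
              -C (ν : ℂ) * (X ^ 2 - C k₂ ^ 2 - C k₃ ^ 2),
              -C (ν : ℂ) * (X ^ 2 - C k₂ ^ 2 - C k₃ ^ 2) ^ 2] * F := by
  have hΔ : (X ^ 2 - C k₂ ^ 2 - C k₃ ^ 2 : ℂ[X])
      = X ^ 2 + C (Complex.I * k₂) ^ 2 + C (Complex.I * k₃) ^ 2 := by
    simp only [← C_pow, mul_pow, Complex.I_sq]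
    simp
    ring
  rw [hΔ]
  have hb : (Complex.I * k₂) ≠ 0 := mul_ne_zero Complex.I_ne_zero h2
  have hc : (Complex.I * k₃) ≠ 0 := mul_ne_zero Complex.I_ne_zero h3
  generalize hbb : Complex.I * k₂ = b at hb ⊢
  generalize hcc : Complex.I * k₃ = c at hc ⊢
  refine ⟨!![-C (b⁻¹) * X, 0, C (1), 0;
          -C (1), -C ((ν:ℂ)*b) - C ((ν:ℂ)*c^2*b⁻¹) - C ((ν:ℂ)*b⁻¹) * X^2, 0, 0;
          -C (c*b⁻¹), 0, -C (c⁻¹) * X, C (1);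
          0, C (1), 0, 0],
        !![-C ((ν:ℂ)*b) * X - C ((ν:ℂ)*c^2*b⁻¹) * X - C ((ν:ℂ)*b⁻¹) * X^3, 0,
              -C ((ν:ℂ)*b*c) - C ((ν:ℂ)*c^3*b⁻¹) - C ((ν:ℂ)*c*b⁻¹) * X^2, C (b);
          C (1) * X, C (b), C (c), 0;
          C (1) + C (b⁻¹^2) * X^2, 0, C (c*b⁻¹^2) * X, 0;
          C (b⁻¹^2*c⁻¹) * X, 0, C (b⁻¹^2), 0], ?_, ?_, ?_⟩
  · apply Polynomial.funext
    intro r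
    simp [Matrix.det_succ_row_zero, Fin.sum_univ_succ, Matrix.vecHead, Matrix.vecTail,
      Fin.castSucc, Fin.castAdd, Fin.castLE, Fin.succAbove]
    try field_simp
    try ring
    try ring_nf
    try field_simp
    try rw [eq_div_iff (by simp [hb, hc])]
    try rw [div_eq_iff (by simp [hb, hc])]
    try ring
  · apply Polynomial.funext
    intro r
    simp [Matrix.det_succ_row_zero, Fin.sum_univ_succ, Matrix.vecHead, Matrix.vecTail,
      Fin.castSucc, Fin.castAdd, Fin.castLE, Fin.succAbove]
    try field_simp
    try ring
    try ring_nf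
    try field_simp
    try rw [eq_div_iff (by simp [hb, hc])]
    try rw [div_eq_iff (by simp [hb, hc])]
    try ring
  · rw [← Matrix.ext_iff]
    intro i j
    fin_cases i <;> fin_cases j <;>
      · apply Polynomial.funext
        intro r
        simp [Matrix.mul_apply, Fin.sum_univ_succ, Matrix.diagonal_apply, Matrix.vecHead,
          Matrix.vecTail, Fin.castSucc, Fin.castAdd, Fin.castLE, Fin.succAbove, Fin.lt_def, Matrix.vecMul,
          dotProduct]
        try field_simp
        try ring
        try ring_nf
        try field_simp
        try rw [eq_div_iff (by simp [hb, hc])]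
        try rw [div_eq_iff (by simp [hb, hc])]
        try ring

set_option maxHeartbeats 4000000 in
private lemma smith_case_b (ν : ℝ) (k₂ k₃ : ℂ) (h2 : k₂ ≠ 0) (h3 : k₃ = 0) :
    ∃ E F : Matrix (Fin 4) (Fin 4) (Polynomial ℂ),
      E.det = 1 ∧ F.det = 1 ∧
      (!![-C (ν : ℂ) * (X ^ 2 - C k₂ ^ 2 - C k₃ ^ 2), 0, 0, -X;
          0, -C (ν : ℂ) * (X ^ 2 - C k₂ ^ 2 - C k₃ ^ 2), 0, -C (Complex.I * k₂);
          0, 0, -C (ν : ℂ) * (X ^ 2 - C k₂ ^ 2 - C k₃ ^ 2), -C (Complex.I * k₃);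
          X, C (Complex.I * k₂), C (Complex.I * k₃), 0] :
        Matrix (Fin 4) (Fin 4) (Polynomial ℂ))
        = E * Matrix.diagonal
            ![1, 1,
              -C (ν : ℂ) * (X ^ 2 - C k₂ ^ 2 - C k₃ ^ 2),
              -C (ν : ℂ) * (X ^ 2 - C k₂ ^ 2 - C k₃ ^ 2) ^ 2] * F := by
  subst h3
  have hΔ : (X ^ 2 - C k₂ ^ 2 - C (0:ℂ) ^ 2 : ℂ[X])
      = X ^ 2 + C (Complex.I * k₂) ^ 2 + C (Complex.I * (0:ℂ)) ^ 2 := by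
    simp only [← C_pow, mul_pow, Complex.I_sq]
    simp
    ring
  rw [hΔ]
  have hb : (Complex.I * k₂) ≠ 0 := mul_ne_zero Complex.I_ne_zero h2
  rw [show Complex.I * (0:ℂ) = 0 by ring]
  generalize hbb : Complex.I * k₂ = b at hb ⊢
  refine ⟨!![C (b⁻¹) * X, 0, 0, C (1);
          C (1), -C ((ν:ℂ)*b) - C ((ν:ℂ)*b⁻¹) * X^2, 0, 0;
          0, 0, C (1), 0;
          0, C (1), 0, 0],
        !![C ((ν:ℂ)*b) * X + C ((ν:ℂ)*b⁻¹) * X^3, 0, 0, -C (b);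
          C (1) * X, C (b), 0, 0;
          0, 0, C (1), 0;
          C (b⁻¹^2), 0, 0, 0], ?_, ?_, ?_⟩
  · apply Polynomial.funext
    intro r
    simp [Matrix.det_succ_row_zero, Fin.sum_univ_succ, Matrix.vecHead, Matrix.vecTail,
      Fin.castSucc, Fin.castAdd, Fin.castLE, Fin.succAbove]
    try field_simp
    try ring
    try ring_nf
    try field_simp
    try rw [eq_div_iff (by simp [hb])]
    try rw [div_eq_iff (by simp [hb])]
    try ring
  · apply Polynomial.funext
    intro r
    simp [Matrix.det_succ_row_zero, Fin.sum_univ_succ, Matrix.vecHead, Matrix.vecTail,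
      Fin.castSucc, Fin.castAdd, Fin.castLE, Fin.succAbove]
    try field_simp
    try ring
    try ring_nf
    try field_simp
    try rw [eq_div_iff (by simp [hb])]
    try rw [div_eq_iff (by simp [hb])]
    try ring
  · rw [← Matrix.ext_iff]
    intro i j
    fin_cases i <;> fin_cases j <;>
      · apply Polynomial.funext
        intro r
        simp [Matrix.mul_apply, Fin.sum_univ_succ, Matrix.diagonal_apply, Matrix.vecHead,
          Matrix.vecTail, Fin.castSucc, Fin.castAdd, Fin.castLE, Fin.succAbove, Fin.lt_def, Matrix.vecMul,
          dotProduct]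
        try field_simp
        try ring
        try ring_nf
        try field_simp
        try rw [eq_div_iff (by simp [hb])]
        try rw [div_eq_iff (by simp [hb])]
        try ring

set_option maxHeartbeats 4000000 in
private lemma smith_case_c (ν : ℝ) (k₂ k₃ : ℂ) (h2 : k₂ = 0) (h3 : k₃ ≠ 0) :
    ∃ E F : Matrix (Fin 4) (Fin 4) (Polynomial ℂ),
      E.det = 1 ∧ F.det = 1 ∧
      (!![-C (ν : ℂ) * (X ^ 2 - C k₂ ^ 2 - C k₃ ^ 2), 0, 0, -X;
          0, -C (ν : ℂ) * (X ^ 2 - C k₂ ^ 2 - C k₃ ^ 2), 0, -C (Complex.I * k₂);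
          0, 0, -C (ν : ℂ) * (X ^ 2 - C k₂ ^ 2 - C k₃ ^ 2), -C (Complex.I * k₃);
          X, C (Complex.I * k₂), C (Complex.I * k₃), 0] :
        Matrix (Fin 4) (Fin 4) (Polynomial ℂ))
        = E * Matrix.diagonal
            ![1, 1,
              -C (ν : ℂ) * (X ^ 2 - C k₂ ^ 2 - C k₃ ^ 2),
              -C (ν : ℂ) * (X ^ 2 - C k₂ ^ 2 - C k₃ ^ 2) ^ 2] * F := by
  subst h2
  have hΔ : (X ^ 2 - C (0:ℂ) ^ 2 - C k₃ ^ 2 : ℂ[X])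
      = X ^ 2 + C (Complex.I * (0:ℂ)) ^ 2 + C (Complex.I * k₃) ^ 2 := by
    simp only [← C_pow, mul_pow, Complex.I_sq]
    simp
    ring
  rw [hΔ]
  have hc : (Complex.I * k₃) ≠ 0 := mul_ne_zero Complex.I_ne_zero h3
  rw [show Complex.I * (0:ℂ) = 0 by ring]
  generalize hcc : Complex.I * k₃ = c at hc ⊢
  refine ⟨!![-C (c⁻¹) * X, 0, 0, C (1);
          0, 0, C (1), 0;
          -C (1), -C ((ν:ℂ)*c) - C ((ν:ℂ)*c⁻¹) * X^2, 0, 0;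
          0, C (1), 0, 0],
        !![-C ((ν:ℂ)*c) * X - C ((ν:ℂ)*c⁻¹) * X^3, 0, 0, C (c);
          C (1) * X, 0, C (c), 0;
          0, C (1), 0, 0;
          C (c⁻¹^2), 0, 0, 0], ?_, ?_, ?_⟩
  · apply Polynomial.funext
    intro r
    simp [Matrix.det_succ_row_zero, Fin.sum_univ_succ, Matrix.vecHead, Matrix.vecTail,
      Fin.castSucc, Fin.castAdd, Fin.castLE, Fin.succAbove]
    try field_simp
    try ring
    try ring_nf
    try field_simp
    try rw [eq_div_iff (by simp [hc])]
    try rw [div_eq_iff (by simp [hc])]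
    try ring
  · apply Polynomial.funext
    intro r
    simp [Matrix.det_succ_row_zero, Fin.sum_univ_succ, Matrix.vecHead, Matrix.vecTail,
      Fin.castSucc, Fin.castAdd, Fin.castLE, Fin.succAbove]
    try field_simp
    try ring
    try ring_nf
    try field_simp
    try rw [eq_div_iff (by simp [hc])]
    try rw [div_eq_iff (by simp [hc])]
    try ring
  · rw [← Matrix.ext_iff]
    intro i j
    fin_cases i <;> fin_cases j <;>
      · apply Polynomial.funext
        intro r
        simp [Matrix.mul_apply, Fin.sum_univ_succ, Matrix.diagonal_apply, Matrix.vecHead,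
          Matrix.vecTail, Fin.castSucc, Fin.castAdd, Fin.castLE, Fin.succAbove, Fin.lt_def, Matrix.vecMul,
          dotProduct]
        try field_simp
        try ring
        try ring_nf
        try field_simp
        try rw [eq_div_iff (by simp [hc])]
        try rw [div_eq_iff (by simp [hc])]
        try ring

/-- Smith factorization of the 3D Stokes symbol: `Â₃ = E * D * F` with
`det E = det F = 1` and `D = diag(1, 1, -ν Δ̂, -ν Δ̂²)`, where `Δ̂ = X² - k₂² - k₃²`. -/
theorem smith_factorization_stokes_3d (ν : ℝ) (hν : ν ≠ 0) (k₂ k₃ : ℂ)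
    (hk : k₂ ≠ 0 ∨ k₃ ≠ 0) :
    ∃ E F : Matrix (Fin 4) (Fin 4) (Polynomial ℂ),
      E.det = 1 ∧ F.det = 1 ∧
      (!![-C (ν : ℂ) * (X ^ 2 - C k₂ ^ 2 - C k₃ ^ 2), 0, 0, -X;
          0, -C (ν : ℂ) * (X ^ 2 - C k₂ ^ 2 - C k₃ ^ 2), 0, -C (Complex.I * k₂);
          0, 0, -C (ν : ℂ) * (X ^ 2 - C k₂ ^ 2 - C k₃ ^ 2), -C (Complex.I * k₃);
          X, C (Complex.I * k₂), C (Complex.I * k₃), 0] :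
        Matrix (Fin 4) (Fin 4) (Polynomial ℂ))
        = E * Matrix.diagonal
            ![1, 1,
              -C (ν : ℂ) * (X ^ 2 - C k₂ ^ 2 - C k₃ ^ 2),
              -C (ν : ℂ) * (X ^ 2 - C k₂ ^ 2 - C k₃ ^ 2) ^ 2] * F := by
  by_cases h2 : k₂ = 0
  · rcases hk with hk | hk
    · exact absurd h2 hk
    · exact smith_case_c ν k₂ k₃ h2 hk
  · by_cases h3 : k₃ = 0
    · exact smith_case_b ν k₂ k₃ h2 h3
    · exact smith_case_bc ν k₂ k₃ h2 h3
end

section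
/- Let ν be a nonzero real number and let k₂, k₃ be complex numbers, not both zero. Set Δ̂ = X² - k₂² - k₃² ∈ ℂ[X] and let Â₃ be the 4×4 matrix over ℂ[X] given by Â₃ = [[-νΔ̂, 0, 0, -X], [0, -νΔ̂, 0, -i·k₂], [0, 0, -νΔ̂, -i·k₃], [X, i·k₂, i·k₃, 0]]. Then: (a) the ideal of ℂ[X] generated by all entries of Â₃ is the unit ideal; (b) the ideal of ℂ[X] generated by all 2×2 minors of Â₃ is the unit ideal; and (c) the ideal of ℂ[X] generated by all 3×3 minors of Â₃ equals the principal ideal generated by Δ̂. -/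
open Polynomial

lemma det3_rank2 {R : Type*} [CommRing R] (p q s t : Fin 3 → R) :
    (Matrix.of fun i j => -(p i * q j) + s i * t j).det = 0 := by
  simp [Matrix.det_fin_three]; ring

/-- Determinantal divisors of the 3D Stokes symbol `Â₃`: the ideals generated by
the entries and by the `2×2` minors are the unit ideal, and the ideal generated by
the `3×3` minors is the principal ideal `(Δ̂)`, where `Δ̂ = X² - k₂² - k₃²`. -/
theorem determinantal_divisors_stokes_3d (ν : ℝ) (hν : ν ≠ 0) (k₂ k₃ : ℂ)
    (hk : k₂ ≠ 0 ∨ k₃ ≠ 0) :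
    let Δ : Polynomial ℂ := X ^ 2 - C k₂ ^ 2 - C k₃ ^ 2
    let A : Matrix (Fin 4) (Fin 4) (Polynomial ℂ) :=
      !![-C (ν : ℂ) * Δ, 0, 0, -X;
         0, -C (ν : ℂ) * Δ, 0, -C (Complex.I * k₂);
         0, 0, -C (ν : ℂ) * Δ, -C (Complex.I * k₃);
         X, C (Complex.I * k₂), C (Complex.I * k₃), 0]
    Ideal.span {p : Polynomial ℂ | ∃ i j, p = A i j} = ⊤ ∧
    Ideal.span {p : Polynomial ℂ | ∃ r c : Fin 2 → Fin 4,
        Function.Injective r ∧ Function.Injective c ∧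
        p = (A.submatrix r c).det} = ⊤ ∧
    Ideal.span {p : Polynomial ℂ | ∃ r c : Fin 3 → Fin 4,
        Function.Injective r ∧ Function.Injective c ∧
        p = (A.submatrix r c).det} = Ideal.span {Δ} := by
  intro Δ A
  have hI : (C Complex.I : ℂ[X]) * C Complex.I = -1 := by
    rw [← C_mul, Complex.I_mul_I, map_neg, map_one]
  refine ⟨?_, ?_, ?_⟩
  · -- (a) entries generate the unit ideal
    rcases hk with h | h
    · refine Ideal.eq_top_of_isUnit_mem _
        (Ideal.subset_span (show A 1 3 ∈ _ from ⟨1, 3, rfl⟩)) ?_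
      have hA : A 1 3 = -C (Complex.I * k₂) := rfl
      rw [hA]
      exact (isUnit_C.mpr (isUnit_iff_ne_zero.mpr
        (mul_ne_zero Complex.I_ne_zero h))).neg
    · refine Ideal.eq_top_of_isUnit_mem _
        (Ideal.subset_span (show A 2 3 ∈ _ from ⟨2, 3, rfl⟩)) ?_
      have hA : A 2 3 = -C (Complex.I * k₃) := rfl
      rw [hA]
      exact (isUnit_C.mpr (isUnit_iff_ne_zero.mpr
        (mul_ne_zero Complex.I_ne_zero h))).neg
  · -- (b) 2×2 minors generate the unit ideal
    rcases hk with h | h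
    · refine Ideal.eq_top_of_isUnit_mem _
        (Ideal.subset_span (show (A.submatrix ![1,3] ![1,3]).det ∈ _ from
          ⟨![1,3], ![1,3], by decide, by decide, rfl⟩)) ?_
      have hdet : (A.submatrix ![1,3] ![1,3]).det = C (-k₂ ^ 2) := by
        simp only [Matrix.det_fin_two, Matrix.submatrix_apply]
        simp only [A, Δ, Matrix.of_apply, Matrix.cons_val, Matrix.cons_val_zero, Matrix.cons_val_one]
        norm_num
        linear_combination (C k₂ ^ 2) * hI
      rw [hdet]
      exact isUnit_C.mpr (isUnit_iff_ne_zero.mpr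
        (neg_ne_zero.mpr (pow_ne_zero 2 h)))
    · refine Ideal.eq_top_of_isUnit_mem _
        (Ideal.subset_span (show (A.submatrix ![2,3] ![2,3]).det ∈ _ from
          ⟨![2,3], ![2,3], by decide, by decide, rfl⟩)) ?_
      have hdet : (A.submatrix ![2,3] ![2,3]).det = C (-k₃ ^ 2) := by
        simp only [Matrix.det_fin_two, Matrix.submatrix_apply]
        simp only [A, Δ, Matrix.of_apply, Matrix.cons_val, Matrix.cons_val_zero, Matrix.cons_val_one]
        norm_num
        linear_combination (C k₃ ^ 2) * hI
      rw [hdet]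
      exact isUnit_C.mpr (isUnit_iff_ne_zero.mpr
        (neg_ne_zero.mpr (pow_ne_zero 2 h)))
  · -- (c) 3×3 minors generate (Δ)
    apply le_antisymm
    · -- every 3×3 minor is divisible by Δ
      rw [Ideal.span_le]
      rintro p ⟨r, c, hr, hc, rfl⟩
      rw [SetLike.mem_coe, Ideal.mem_span_singleton]
      set w : Fin 4 → ℂ[X] := ![X, C (Complex.I * k₂), C (Complex.I * k₃), 0] with hw
      set e : Fin 4 → ℂ[X] := ![0, 0, 0, 1] with he
      set φ := Ideal.Quotient.mk (Ideal.span {Δ}) with hφ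
      have hΔ : φ Δ = 0 := by
        rw [hφ, Ideal.Quotient.eq_zero_iff_mem]
        exact Ideal.subset_span rfl
      have key : ∀ i j, φ (A i j) = -(φ (w i) * φ (e j)) + φ (e i) * φ (w j) := by
        intro i j
        fin_cases i <;> fin_cases j <;>
          simp [A, w, e, map_mul, map_neg, hΔ]
      rw [← Ideal.Quotient.eq_zero_iff_dvd, ← hφ, RingHom.map_det]
      have hmap : (A.submatrix r c).map φ =
          Matrix.of fun i j => -(φ (w (r i)) * φ (e (c j))) + φ (e (r i)) * φ (w (c j)) := by
        ext i j
        simp [Matrix.map_apply, Matrix.submatrix_apply, key]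
      rw [show φ.mapMatrix (A.submatrix r c) = (A.submatrix r c).map φ from rfl,
        hmap, det3_rank2]
    · -- Δ lies in the ideal of 3×3 minors
      rw [Ideal.span_le, Set.singleton_subset_iff, SetLike.mem_coe]
      by_cases h : k₂ ^ 2 + k₃ ^ 2 = 0
      · -- then both k₂ and k₃ are nonzero; use the minor  ν k₂ k₃ Δ
        have hk₂ : k₂ ≠ 0 := by
          rcases hk with h' | h'
          · exact h'
          · intro h0
            apply h'
            have : k₃ ^ 2 = 0 := by rw [h0] at h; simpa using h
            exact pow_eq_zero_iff (by norm_num) |>.mp this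
        have hk₃ : k₃ ≠ 0 := by
          intro h0
          apply hk₂
          have : k₂ ^ 2 = 0 := by rw [h0] at h; simpa using h
          exact pow_eq_zero_iff (by norm_num) |>.mp this
        have hmem : (A.submatrix ![0,1,3] ![0,2,3]).det ∈
            Ideal.span {p : Polynomial ℂ | ∃ r c : Fin 3 → Fin 4,
              Function.Injective r ∧ Function.Injective c ∧
              p = (A.submatrix r c).det} :=
          Ideal.subset_span ⟨![0,1,3], ![0,2,3], by decide, by decide, rfl⟩
        have hdet : (A.submatrix ![0,1,3] ![0,2,3]).det = C (↑ν * (k₂ * k₃)) * Δ := by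
          simp only [Matrix.det_fin_three, Matrix.submatrix_apply]
          simp only [A, Δ, Matrix.of_apply, Matrix.cons_val, Matrix.cons_val_zero, Matrix.cons_val_one]
          norm_num
          linear_combination (-(C (ν:ℂ) * (X ^ 2 - C k₂ ^ 2 - C k₃ ^ 2) * (C k₂ * C k₃))) * hI
        have hc : (ν : ℂ) * (k₂ * k₃) ≠ 0 :=
          mul_ne_zero (Complex.ofReal_ne_zero.mpr hν) (mul_ne_zero hk₂ hk₃)
        have hΔeq : Δ = C ((↑ν * (k₂ * k₃))⁻¹) * (C (↑ν * (k₂ * k₃)) * Δ) := by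
          rw [← mul_assoc, ← C_mul, inv_mul_cancel₀ hc, C_1, one_mul]
        rw [hΔeq, ← hdet]
        exact Ideal.mul_mem_left _ _ hmem
      · -- use the minor  ν (k₂² + k₃²) Δ
        have hmem : (A.submatrix ![1,2,3] ![1,2,3]).det ∈
            Ideal.span {p : Polynomial ℂ | ∃ r c : Fin 3 → Fin 4,
              Function.Injective r ∧ Function.Injective c ∧
              p = (A.submatrix r c).det} :=
          Ideal.subset_span ⟨![1,2,3], ![1,2,3], by decide, by decide, rfl⟩
        have hdet : (A.submatrix ![1,2,3] ![1,2,3]).det = C (↑ν * (k₂ ^ 2 + k₃ ^ 2)) * Δ := by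
          simp only [Matrix.det_fin_three, Matrix.submatrix_apply]
          simp only [A, Δ, Matrix.of_apply, Matrix.cons_val, Matrix.cons_val_zero, Matrix.cons_val_one]
          norm_num
          linear_combination (-(C (ν:ℂ) * (X ^ 2 - C k₂ ^ 2 - C k₃ ^ 2) * (C k₂ ^ 2 + C k₃ ^ 2))) * hI
        have hc : (ν : ℂ) * (k₂ ^ 2 + k₃ ^ 2) ≠ 0 :=
          mul_ne_zero (Complex.ofReal_ne_zero.mpr hν) h
        have hΔeq : Δ = C ((↑ν * (k₂ ^ 2 + k₃ ^ 2))⁻¹) * (C (↑ν * (k₂ ^ 2 + k₃ ^ 2)) * Δ) := by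
          rw [← mul_assoc, ← C_mul, inv_mul_cancel₀ hc, C_1, one_mul]
        rw [hΔeq, ← hdet]
        exact Ideal.mul_mem_left _ _ hmem
end

section
/- Let ν be a nonzero real number, c, b₁, b₂ real numbers, and k a nonzero complex number. Set L̂ = c + b₁·X + i·b₂·k - ν·(X² - k²) ∈ ℂ[X] and let Â_Oseen be the 3×3 matrix over ℂ[X] given by Â_Oseen = [[L̂, 0, -X], [0, L̂, -i·k], [X, i·k, 0]]. Then there exist 3×3 matrices E and F with entries in ℂ[X] such that det(E) = 1, det(F) = 1, and Â_Oseen = E·D·F, where D is the diagonal matrix D = diag(1, 1, L̂·(X² - k²)). -/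
/-!
The determinant of the symbol `!![L, 0, -x; 0, L, -y; x, y, 0]` is `L * (x ^ 2 + y ^ 2)`. When `y`
is a unit it is an admissible pivot: eliminating with it brings the symbol to
`diag(1, 1, L * (x ^ 2 + y ^ 2))` by unimodular row and column operations. For the Oseen
symbol, `x = X` and `y = i k`, a unit of `ℂ[X]` because `k ≠ 0`, and `X ^ 2 + (i k) ^ 2 = X ^ 2 - k ^ 2`.
-/

open Polynomial

namespace Oseen

variable {R : Type*} [CommRing R] (L x : R) (u : Rˣ)

def symbol (y : R) : Matrix (Fin 3) (Fin 3) R :=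
  !![L, 0, -x; 0, L, -y; x, y, 0]

def leftFactor : Matrix (Fin 3) (Fin 3) R :=
  !![0, -x, ↑u⁻¹ ^ 2; L, -u, 0; u, 0, 0]

def rightFactor : Matrix (Fin 3) (Fin 3) R :=
  !![↑u⁻¹ * x, 1, 0; ↑u⁻¹ ^ 2 * L * x, 0, 1; 1, 0, 0]

theorem det_leftFactor : (leftFactor L x u).det = 1 := by
  simp [leftFactor, Matrix.det_fin_three, sq, mul_assoc]

theorem det_rightFactor : (rightFactor L x u).det = 1 := by
  simp [rightFactor, Matrix.det_fin_three]

theorem symbol_eq_leftFactor_mul_diagonal_mul_rightFactor :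
    symbol L x u = leftFactor L x u *
      Matrix.diagonal ![1, 1, L * (x ^ 2 + (u : R) ^ 2)] * rightFactor L x u := by
  have hu : (u : R) * ↑u⁻¹ = 1 := u.mul_inv
  rw [symbol, leftFactor, rightFactor, Matrix.diagonal_vec3, Matrix.mul_fin_three,
    Matrix.mul_fin_three]
  ext i j
  fin_cases i <;> fin_cases j <;> simp
  · linear_combination (-(u * ↑u⁻¹ + 1) * L) * hu
  · linear_combination (L * ↑u⁻¹ * x) * hu

end Oseen

theorem smith_factorization_oseen_2d_general (ν : ℝ) (c b₁ b₂ : ℝ)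
    (k : ℂ) (hk : k ≠ 0) :
    let L : Polynomial ℂ :=
      C (c : ℂ) + C (b₁ : ℂ) * X + C (Complex.I * (b₂ : ℂ) * k)
        - C (ν : ℂ) * (X ^ 2 - C k ^ 2)
    ∃ E F : Matrix (Fin 3) (Fin 3) (Polynomial ℂ),
      E.det = 1 ∧ F.det = 1 ∧
      (!![L, 0,                  -X;
          0, L,                  -C (Complex.I * k);
          X, C (Complex.I * k),  0] :
        Matrix (Fin 3) (Fin 3) (Polynomial ℂ))
        = E * Matrix.diagonal ![1, 1, L * (X ^ 2 - C k ^ 2)] * F := by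
  intro L
  have hik : IsUnit (C (Complex.I * k)) :=
    isUnit_C.mpr (mul_ne_zero Complex.I_ne_zero hk).isUnit
  have hlap : (X ^ 2 - C k ^ 2 : ℂ[X]) = X ^ 2 + C (Complex.I * k) ^ 2 := by
    rw [← C_pow, ← C_pow, mul_pow, Complex.I_sq, neg_one_mul, C_neg, sub_eq_add_neg]
  refine ⟨Oseen.leftFactor L X hik.unit, Oseen.rightFactor L X hik.unit,
    Oseen.det_leftFactor .., Oseen.det_rightFactor .., ?_⟩
  rw [hlap]
  simpa only [Oseen.symbol, hik.unit_spec] using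
    Oseen.symbol_eq_leftFactor_mul_diagonal_mul_rightFactor L X hik.unit

/-- Smith factorization of the 2D Oseen symbol: `Â_Oseen = E * D * F` with
`det E = det F = 1` and `D = diag(1, 1, L̂ (X² - k²))`, where
`L̂ = c + b₁ X + i b₂ k - ν (X² - k²)` is the convection–diffusion symbol. -/
theorem smith_factorization_oseen_2d (ν : ℝ) (hν : ν ≠ 0) (c b₁ b₂ : ℝ)
    (k : ℂ) (hk : k ≠ 0) :
    let L : Polynomial ℂ :=
      C (c : ℂ) + C (b₁ : ℂ) * X + C (Complex.I * (b₂ : ℂ) * k)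
        - C (ν : ℂ) * (X ^ 2 - C k ^ 2)
    ∃ E F : Matrix (Fin 3) (Fin 3) (Polynomial ℂ),
      E.det = 1 ∧ F.det = 1 ∧
      (!![L, 0,                  -X;
          0, L,                  -C (Complex.I * k);
          X, C (Complex.I * k),  0] :
        Matrix (Fin 3) (Fin 3) (Polynomial ℂ))
        = E * Matrix.diagonal ![1, 1, L * (X ^ 2 - C k ^ 2)] * F :=
  smith_factorization_oseen_2d_general ν c b₁ b₂ k hk
end
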